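/- Let f : ℝ^m → ℝ be a monotone aggregation function (non-decreasing in each argument), and let R_1, ..., R_m be finite lists of reals each sorted in non-increasing order, with d_i elements of R_i read so far. Define the threshold θ as the maximum over i of f applied to (top of R_1, ..., the d_i-th element of R_i, ..., top of R_m). Then for any tuple (x_1, ..., x_m) with x_i ∈ R_i such that some x_i is at position strictly greater than d_i in R_i, f(x_1, ..., x_m) ≤ θ. -/
import Mathlib


/-- A simple path of length `ℓ` in a graph with adjacency `Adj`:
`ℓ+1` distinct vertices with consecutive vertices adjacent. -/
structure SPath (V : Type*) (Adj : V → V → Prop) (ℓ : ℕ) where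
  v : Fin (ℓ + 1) → V
  inj : Function.Injective v
  adj : ∀ i : Fin ℓ, Adj (v i.castSucc) (v i.succ)

/-- The weight of a simple path: sum of its edge weights. -/
def SPath.weight {V : Type*} {Adj : V → V → Prop} {ℓ : ℕ}
    (W : V → V → ℝ) (P : SPath V Adj ℓ) : ℝ :=
  ∑ i : Fin ℓ, W (P.v i.castSucc) (P.v i.succ)

theorem stmt_17 (m : ℕ) (hm : 0 < m) (f : (Fin m → ℝ) → ℝ)
    (hf : ∀ x y : Fin m → ℝ, (∀ i, x i ≤ y i) → f x ≤ f y)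
    (n : Fin m → ℕ) (hn : ∀ i, 0 < n i)
    (t : (i : Fin m) → Fin (n i) → ℝ)
    (hsorted : ∀ i : Fin m, ∀ j k : Fin (n i), j ≤ k → t i k ≤ t i j)
    (d : (i : Fin m) → Fin (n i)) :
    ∀ x : (i : Fin m) → Fin (n i), (∃ i, d i < x i) →
      f (fun i => t i (x i)) ≤
        Finset.univ.sup' (Finset.univ_nonempty_iff.mpr ⟨⟨0, hm⟩⟩)
          (fun i => f (fun j => if h : j = i then t i (h ▸ d i) else t j ⟨0, hn j⟩)) := by
  intro x ⟨i, hi⟩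
  refine le_trans ?_ (Finset.le_sup' _ (Finset.mem_univ i))
  apply hf
  intro j
  by_cases h : j = i
  · subst h
    simp only [dif_pos rfl]
    exact hsorted j (d j) (x j) hi.le
  · simp only [dif_neg h]
    exact hsorted j ⟨0, hn j⟩ (x j) (by simp [Fin.le_def])
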